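/- Let K = {0,1} with discrete topology and H = {f ∈ C(K,𝔽²) : f(1) = ½(f₂(0), f₁(0))} ⊆ C(K, (𝔽², ∥·∥_p)), where f = (f₁,f₂). Then the evaluation operator φ_H(1) has norm exactly ½, while H_w = C(K,𝔽) so φ_{H_w}(1) has norm 1; hence ∥φ_H(t)∥ < ∥φ_{H_w}(t)∥ can occur. -/

import Mathlib

/-! An element `f` of `H15 p` is determined by `v = f 0`, and `f 1 = ½ • swap v`. Swapping the
coordinates is an isometry of `ℓ_p²`, so `‖f 1‖ = ‖f 0‖ / 2 ≤ ‖f‖ / 2`, with equality when `f 0` is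
a unit vector. On the other hand every `g ∈ C(K, ℝ)` is already of the form `x ∘ f`: take
`f 0 = (g 0, 2 g 1)` and `x` the first coordinate. Hence `H_w = C(K, ℝ)`, on which evaluation at a
point has norm `1`. -/

open ContinuousMap

/-- The function space `H = {f ∈ C({0,1}, 𝔽²) : f(1) = ½(f₂(0), f₁(0))}`
inside `C({0,1}, (𝔽², ‖·‖_p))`. -/
def H15 (p : ENNReal) [Fact (1 ≤ p)] :
    Submodule ℝ C(Fin 2, PiLp p fun _ : Fin 2 => ℝ) where
  carrier := {f | f 1 0 = f 0 1 / 2 ∧ f 1 1 = f 0 0 / 2}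
  add_mem' := by
    rintro f g ⟨hf1, hf2⟩ ⟨hg1, hg2⟩
    refine ⟨?_, ?_⟩
    · show ((f + g) : C(Fin 2, PiLp p fun _ : Fin 2 => ℝ)) 1 0
        = ((f + g) : C(Fin 2, PiLp p fun _ : Fin 2 => ℝ)) 0 1 / 2
      rw [ContinuousMap.add_apply, ContinuousMap.add_apply,
        PiLp.add_apply, PiLp.add_apply, hf1, hg1]
      ring
    · show ((f + g) : C(Fin 2, PiLp p fun _ : Fin 2 => ℝ)) 1 1
        = ((f + g) : C(Fin 2, PiLp p fun _ : Fin 2 => ℝ)) 0 0 / 2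
      rw [ContinuousMap.add_apply, ContinuousMap.add_apply,
        PiLp.add_apply, PiLp.add_apply, hf2, hg2]
      ring
  zero_mem' := by
    constructor <;> simp
  smul_mem' := by
    rintro c f ⟨hf1, hf2⟩
    refine ⟨?_, ?_⟩
    · show ((c • f) : C(Fin 2, PiLp p fun _ : Fin 2 => ℝ)) 1 0
        = ((c • f) : C(Fin 2, PiLp p fun _ : Fin 2 => ℝ)) 0 1 / 2
      rw [ContinuousMap.smul_apply, ContinuousMap.smul_apply,
        PiLp.smul_apply, PiLp.smul_apply, hf1]
      simp only [smul_eq_mul]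
      ring
    · show ((c • f) : C(Fin 2, PiLp p fun _ : Fin 2 => ℝ)) 1 1
        = ((c • f) : C(Fin 2, PiLp p fun _ : Fin 2 => ℝ)) 0 0 / 2
      rw [ContinuousMap.smul_apply, ContinuousMap.smul_apply,
        PiLp.smul_apply, PiLp.smul_apply, hf2]
      simp only [smul_eq_mul]
      ring

theorem ContinuousMap.norm_evalCLM {X 𝕜 : Type*} [TopologicalSpace X] [CompactSpace X]
    [NontriviallyNormedField 𝕜] (x : X) :
    ‖(evalCLM 𝕜 x : C(X, 𝕜) →L[𝕜] 𝕜)‖ = 1 := by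
  have : Nonempty X := ⟨x⟩
  refine le_antisymm ?_ ?_
  · refine ContinuousLinearMap.opNorm_le_bound _ zero_le_one fun g => ?_
    simpa using g.norm_coe_le_norm x
  · simpa using (evalCLM 𝕜 x : C(X, 𝕜) →L[𝕜] 𝕜).le_opNorm 1

section H15

variable (p : ENNReal) [Fact (1 ≤ p)]

noncomputable def swapCoords : (PiLp p fun _ : Fin 2 => ℝ) ≃ₗᵢ[ℝ] PiLp p fun _ : Fin 2 => ℝ :=
  LinearIsometryEquiv.piLpCongrLeft p ℝ ℝ (Equiv.swap 0 1)

variable {p}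

theorem swapCoords_apply (v : PiLp p fun _ : Fin 2 => ℝ) (i : Fin 2) :
    swapCoords p v i = v (Equiv.swap 0 1 i) := by
  simp [swapCoords, LinearIsometryEquiv.piLpCongrLeft_apply, Equiv.piCongrLeft']

theorem mem_H15_iff {f : C(Fin 2, PiLp p fun _ : Fin 2 => ℝ)} :
    f ∈ H15 p ↔ f 1 = (1 / 2 : ℝ) • swapCoords p (f 0) := by
  constructor
  · rintro ⟨h0, h1⟩
    ext i
    fin_cases i <;> simp [swapCoords_apply, h0, h1] <;> ring
  · intro h
    constructor <;> simp [h, swapCoords_apply] <;> ring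

theorem norm_apply_one_of_mem_H15 {f : C(Fin 2, PiLp p fun _ : Fin 2 => ℝ)} (hf : f ∈ H15 p) :
    ‖f 1‖ = ‖f 0‖ / 2 := by
  rw [mem_H15_iff.1 hf, norm_smul, LinearIsometryEquiv.norm_map]
  norm_num
  ring

noncomputable def extendH15 (v : PiLp p fun _ : Fin 2 => ℝ) :
    C(Fin 2, PiLp p fun _ : Fin 2 => ℝ) :=
  ⟨![v, (1 / 2 : ℝ) • swapCoords p v], continuous_of_discreteTopology⟩

theorem extendH15_apply_zero (v : PiLp p fun _ : Fin 2 => ℝ) : extendH15 v 0 = v :=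
  rfl

theorem extendH15_mem (v : PiLp p fun _ : Fin 2 => ℝ) : extendH15 v ∈ H15 p :=
  mem_H15_iff.2 rfl

theorem norm_extendH15_apply_one (v : PiLp p fun _ : Fin 2 => ℝ) :
    ‖extendH15 v 1‖ = ‖v‖ / 2 := by
  rw [norm_apply_one_of_mem_H15 (extendH15_mem v), extendH15_apply_zero]

theorem norm_extendH15 (v : PiLp p fun _ : Fin 2 => ℝ) : ‖extendH15 v‖ = ‖v‖ := by
  refine le_antisymm ((ContinuousMap.norm_le _ (norm_nonneg v)).2 fun t => ?_)
    ((extendH15 v).norm_coe_le_norm 0)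
  fin_cases t
  · exact le_rfl
  · change ‖extendH15 v 1‖ ≤ ‖v‖
    linarith [norm_extendH15_apply_one v, norm_nonneg v]

theorem isGreatest_norm_apply_one_H15 :
    IsGreatest ((fun f : C(Fin 2, PiLp p fun _ : Fin 2 => ℝ) => ‖f 1‖) ''
      {f | f ∈ H15 p ∧ ‖f‖ ≤ 1}) (1 / 2) := by
  refine ⟨?_, ?_⟩
  · have he : ‖(PiLp.single p 0 1 : PiLp p fun _ : Fin 2 => ℝ)‖ = 1 := by simp
    refine ⟨extendH15 (PiLp.single p 0 1),
      ⟨extendH15_mem _, (norm_extendH15 _).trans_le he.le⟩, ?_⟩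
    simp only [norm_extendH15_apply_one, he]
  · rintro _ ⟨f, ⟨hf, hf_le⟩, rfl⟩
    change ‖f 1‖ ≤ 1 / 2
    rw [norm_apply_one_of_mem_H15 hf]
    linarith [f.norm_coe_le_norm 0]

theorem exists_mem_H15_comp_eq (g : C(Fin 2, ℝ)) :
    ∃ f ∈ H15 p, ∃ x : (PiLp p fun _ : Fin 2 => ℝ) →L[ℝ] ℝ, ∀ t : Fin 2, g t = x (f t) := by
  refine ⟨extendH15 (WithLp.toLp p ![g 0, 2 * g 1]), extendH15_mem _,
    PiLp.proj (𝕜 := ℝ) p (fun _ : Fin 2 => ℝ) 0, fun t => ?_⟩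
  fin_cases t <;> simp [extendH15, swapCoords_apply]

end H15

/-- for `K = {0,1}` and `H = {f : f(1) = ½(f₂(0), f₁(0))} ⊆ C(K,(𝔽²,‖·‖_p))`,
the evaluation operator `φ_H(1)` has norm exactly `1/2`, while `H_w = C(K,𝔽)` and the
evaluation functional `φ_{H_w}(1)` has norm `1`. -/
theorem stmt_15 (p : ENNReal) [Fact (1 ≤ p)] :
    (sSup ((fun f : C(Fin 2, PiLp p fun _ : Fin 2 => ℝ) => ‖f 1‖) ''
        {f : C(Fin 2, PiLp p fun _ : Fin 2 => ℝ) | f ∈ H15 p ∧ ‖f‖ ≤ 1}) = 1 / 2) ∧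
    (Submodule.span ℝ {g : C(Fin 2, ℝ) |
        ∃ f ∈ H15 p, ∃ x : (PiLp p fun _ : Fin 2 => ℝ) →L[ℝ] ℝ,
          ∀ t : Fin 2, g t = x (f t)}
      = ⊤) ∧
    (∀ ψ : C(Fin 2, ℝ) →L[ℝ] ℝ, (∀ g : C(Fin 2, ℝ), ψ g = g 1) → ‖ψ‖ = 1) := by
  refine ⟨isGreatest_norm_apply_one_H15.csSup_eq, ?_, fun ψ hψ => ?_⟩
  · exact Submodule.eq_top_iff'.2 fun g => Submodule.subset_span (exists_mem_H15_comp_eq g)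
  · rw [show ψ = ContinuousMap.evalCLM ℝ 1 from ContinuousLinearMap.ext hψ,
      ContinuousMap.norm_evalCLM]
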